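/- arXiv:0804.3192 — 4 statements merged into one kernel-verified Lean document; each statement's English description precedes it below -/
import Mathlib

section
/- Let A be a flow-hyperbolic real d×d matrix. Then every solution e^{tA}·v with v ∉ E^s(A) ∪ E^u(A) diverges to infinity both in the future and in the past: ‖exp(tA)·v‖ → ∞ as t → +∞ and ‖exp(tA)·v‖ → ∞ as t → -∞. Moreover, for every nonzero v ∈ E^s(A), ‖exp(tA)·v‖ → ∞ as t → -∞, and for every nonzero v ∈ E^u(A), ‖exp(tA)·v‖ → ∞ as t → +∞. -/
/-!
Complexify: `B = A.map (algebraMap ℝ ℂ)` has flows of the same norm. Since no eigenvalue of `B`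
lies on the imaginary axis, `ℂⁿ` is the sum of the span `E₋` of the generalized eigenspaces with
`Re μ < 0` and the span `E₊` of those with `Re μ > 0`. On a generalized eigenspace,
`exp (t • B) w` is `e^{tμ}` times a polynomial in `t`, so the flow decays forward on `E₋` and
backward on `E₊`. As `E₊` is finite-dimensional and invariant, the pointwise decay of
`exp (-t • B)` on it is uniform, and `u = exp (-t • B) (exp (t • B) u)` then forces
`‖exp (t • B) u‖ → ∞` for `0 ≠ u ∈ E₊`. Writing `x = s + u` with `s ∈ E₋`, `u ∈ E₊`, the forward
flow of `x` tends to `0` if `u = 0` and to infinity otherwise; replacing `B` by `-B` swaps `E₋`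
and `E₊` and gives the backward statements.
-/

open Filter Topology

/-- A real d×d matrix is *flow-hyperbolic* if no eigenvalue of its
complexification has zero real part. -/
def IsFlowHyperbolic {d : ℕ} (A : Matrix (Fin d) (Fin d) ℝ) : Prop :=
  ∀ z ∈ spectrum ℂ (A.map (algebraMap ℝ ℂ)), z.re ≠ 0

/-- The matrix exponential `exp (t • A)`. -/
noncomputable def flowAt {d : ℕ} (A : Matrix (Fin d) (Fin d) ℝ) (t : ℝ) :
    Matrix (Fin d) (Fin d) ℝ :=
  NormedSpace.exp (t • A)

/-- The stable set `E^s(A)`: vectors with `exp (tA)·v → 0` as `t → +∞`. -/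
def stableSet {d : ℕ} (A : Matrix (Fin d) (Fin d) ℝ) : Set (Fin d → ℝ) :=
  {v | Tendsto (fun t : ℝ => (flowAt A t).mulVec v) atTop (nhds 0)}

/-- The unstable set `E^u(A)`: vectors with `exp (tA)·v → 0` as `t → -∞`. -/
def unstableSet {d : ℕ} (A : Matrix (Fin d) (Fin d) ℝ) : Set (Fin d → ℝ) :=
  {v | Tendsto (fun t : ℝ => (flowAt A t).mulVec v) atBot (nhds 0)}

open NormedSpace Set

theorem tendsto_ofReal_pow_mul_cexp_atTop {μ : ℂ} (hμ : μ.re < 0) (k : ℕ) :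
    Tendsto (fun t : ℝ => (t : ℂ) ^ k * Complex.exp (t * μ)) atTop (𝓝 0) := by
  rw [tendsto_zero_iff_norm_tendsto_zero]
  refine (tendsto_rpow_mul_exp_neg_mul_atTop_nhds_zero k (-μ.re) (by linarith)).congr' ?_
  filter_upwards [eventually_ge_atTop 0] with t ht
  rw [norm_mul, norm_pow, Complex.norm_exp, Complex.norm_of_nonneg ht, Real.rpow_natCast]
  simp [mul_comm]

theorem tendsto_exp_smul_neg_atTop_iff {𝔸 β : Type*} [Ring 𝔸] [Algebra ℚ 𝔸]
    [TopologicalSpace 𝔸] [IsTopologicalRing 𝔸] [Module ℝ 𝔸] (a : 𝔸) (φ : 𝔸 → β) {l : Filter β} :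
    Tendsto (fun t : ℝ => φ (exp (t • -a))) atTop l ↔
      Tendsto (fun t : ℝ => φ (exp (t • a))) atBot l := by
  simp_rw [smul_neg, ← neg_smul]
  exact tendsto_comp_neg_atTop_iff (f := fun t : ℝ => φ (exp (t • a)))

theorem tendsto_exp_smul_neg_atBot_iff {𝔸 β : Type*} [Ring 𝔸] [Algebra ℚ 𝔸]
    [TopologicalSpace 𝔸] [IsTopologicalRing 𝔸] [Module ℝ 𝔸] (a : 𝔸) (φ : 𝔸 → β) {l : Filter β} :
    Tendsto (fun t : ℝ => φ (exp (t • -a))) atBot l ↔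
      Tendsto (fun t : ℝ => φ (exp (t • a))) atTop l := by
  simpa using (tendsto_exp_smul_neg_atTop_iff (-a) φ).symm

theorem Pi.norm_algebraMap_comp {ι : Type*} [Fintype ι] (w : ι → ℝ) :
    ‖algebraMap ℝ ℂ ∘ w‖ = ‖w‖ := by
  simp [Pi.norm_def, Function.comp_def]

theorem spectrum.re_ne_zero_of_neg {A : Type*} [Ring A] [Algebra ℂ A] {a : A}
    (h : ∀ z ∈ spectrum ℂ a, z.re ≠ 0) : ∀ z ∈ spectrum ℂ (-a), z.re ≠ 0 := by
  intro z hz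
  rw [← spectrum.neg_eq, Set.mem_neg] at hz
  simpa using h _ hz

theorem Module.End.maxGenEigenspace_neg {R M : Type*} [CommRing R] [AddCommGroup M]
    [Module R M] (f : Module.End R M) (μ : R) :
    (-f).maxGenEigenspace (-μ) = f.maxGenEigenspace μ := by
  have h : -f - (-μ) • 1 = -(f - μ • 1) := by rw [neg_smul]; abel
  ext x
  simp only [Module.End.mem_maxGenEigenspace, h]
  refine exists_congr fun k => ?_
  rw [neg_pow, Module.End.mul_apply]
  rcases neg_one_pow_eq_or (Module.End R M) k with h | h <;> simp [h]

theorem Submodule.exists_tendsto_zero_norm_apply_le {𝕜 E F α : Type*}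
    [NontriviallyNormedField 𝕜] [CompleteSpace 𝕜] [NormedAddCommGroup E] [NormedSpace 𝕜 E]
    [NormedAddCommGroup F] [NormedSpace 𝕜 F] {N : Submodule 𝕜 E} [FiniteDimensional 𝕜 N]
    {l : Filter α} {G : α → E →ₗ[𝕜] F} (hG : ∀ x ∈ N, Tendsto (fun a => G a x) l (𝓝 0)) :
    ∃ ε : α → ℝ, Tendsto ε l (𝓝 0) ∧ ∀ a, ∀ x ∈ N, ‖G a x‖ ≤ ε a * ‖x‖ := by
  let b := Module.finBasis 𝕜 N
  obtain ⟨C, -, hC⟩ := b.exists_opNorm_le (F := F)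
  refine ⟨fun a => C * ∑ i, ‖G a (b i)‖, ?_, fun a x hx => ?_⟩
  · simpa using ((tendsto_finsetSum _ fun i _ => (hG _ (b i).2).norm).const_mul C)
  · let u := LinearMap.toContinuousLinearMap ((G a).domRestrict N)
    calc ‖G a x‖ = ‖u ⟨x, hx⟩‖ := rfl
      _ ≤ ‖u‖ * ‖x‖ := u.le_opNorm _
      _ ≤ _ := by
        gcongr
        exact hC (by positivity) fun i =>
          Finset.single_le_sum (f := fun i => ‖G a (b i)‖) (fun _ _ => norm_nonneg _)
            (Finset.mem_univ i)

theorem Submodule.tendsto_norm_apply_atTop_of_leftInverse {𝕜 E α : Type*}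
    [NontriviallyNormedField 𝕜] [CompleteSpace 𝕜] [NormedAddCommGroup E] [NormedSpace 𝕜 E]
    {N : Submodule 𝕜 E} [FiniteDimensional 𝕜 N] {l : Filter α} {F G : α → E →ₗ[𝕜] E}
    (hF : ∀ a, MapsTo (F a) N N) (hGF : ∀ a x, G a (F a x) = x)
    (hG : ∀ x ∈ N, Tendsto (fun a => G a x) l (𝓝 0)) {u : E} (hu : u ∈ N) (hu0 : u ≠ 0) :
    Tendsto (fun a => ‖F a u‖) l atTop := by
  obtain ⟨ε, hε, hGε⟩ := exists_tendsto_zero_norm_apply_le hG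
  have hle : ∀ a, ‖u‖ ≤ ε a * ‖F a u‖ := fun a => by
    simpa only [hGF] using hGε a _ (hF a hu)
  have hpos : ∀ a, 0 < ε a := fun a =>
    pos_of_mul_pos_left ((norm_pos_iff.2 hu0).trans_le (hle a)) (norm_nonneg _)
  have hinv : Tendsto (fun a => ‖u‖ * (ε a)⁻¹) l atTop :=
    (tendsto_inv_nhdsGT_zero.comp (tendsto_nhdsWithin_iff.2 ⟨hε, .of_forall hpos⟩))
      |>.const_mul_atTop (norm_pos_iff.2 hu0)
  refine tendsto_atTop_mono (fun a => ?_) hinv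
  rw [← div_eq_mul_inv, div_le_iff₀' (hpos a)]
  exact hle a

namespace Matrix

variable {n : Type*} [Fintype n] [DecidableEq n]

open scoped Norms.Operator in
theorem exp_mulVec_eq_sum_of_pow_mulVec_eq_zero {𝕂 : Type*} [RCLike 𝕂] {N : Matrix n n 𝕂} {K : ℕ}
    {w : n → 𝕂} (hw : N ^ K *ᵥ w = 0) :
    exp N *ᵥ w = ∑ k ∈ Finset.range K, ((k.factorial⁻¹ : 𝕂) • N ^ k) *ᵥ w := by
  have hseries : HasSum (fun k => ((k.factorial⁻¹ : 𝕂) • N ^ k) *ᵥ w) (exp N *ᵥ w) :=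
    (exp_series_hasSum_exp' (𝕂 := 𝕂) N).map (mulVec.addMonoidHomLeft w)
      (continuous_id.matrix_mulVec continuous_const)
  refine hseries.unique <| hasSum_sum_of_ne_finset_zero fun k hk => ?_
  rw [Finset.mem_range, not_lt] at hk
  rw [← Nat.sub_add_cancel hk, pow_add, smul_mulVec, ← mulVec_mulVec, hw, mulVec_zero, smul_zero]

theorem exp_algebraMap_complex (c : ℂ) :
    exp (algebraMap ℂ (Matrix n n ℂ) c) = Complex.exp c • 1 := by
  rw [algebraMap_eq_diagonal, exp_diagonal]
  ext i j
  simp [diagonal_apply, one_apply, Complex.exp_eq_exp_ℂ]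

theorem exp_smul_mulVec_eq_sum (B : Matrix n n ℂ) (μ : ℂ) {K : ℕ} {w : n → ℂ}
    (hw : (B - μ • 1) ^ K *ᵥ w = 0) (t : ℂ) :
    exp (t • B) *ᵥ w = ∑ k ∈ Finset.range K,
      (t ^ k * Complex.exp (t * μ) / k.factorial) • ((B - μ • 1) ^ k *ᵥ w) := by
  set N := B - μ • 1
  have hsplit : t • B = algebraMap ℂ _ (t * μ) + t • N := by
    rw [Algebra.algebraMap_eq_smul_one, smul_sub, mul_smul]; abel
  have htN : (t • N) ^ K *ᵥ w = 0 := by rw [smul_pow, smul_mulVec, hw, smul_zero]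
  rw [hsplit, exp_add_of_commute _ _ (Algebra.commute_algebraMap_left _ _),
    exp_algebraMap_complex, ← mulVec_mulVec, exp_mulVec_eq_sum_of_pow_mulVec_eq_zero htN,
    smul_mulVec, one_mulVec, Finset.smul_sum]
  refine Finset.sum_congr rfl fun k _ => ?_
  rw [smul_pow, smul_smul, smul_mulVec, smul_smul]
  ring_nf

theorem mem_maxGenEigenspace_toLin'_iff {R : Type*} [CommRing R] (B : Matrix n n R) (μ : R)
    (w : n → R) :
    w ∈ Module.End.maxGenEigenspace (toLin' B) μ ↔ ∃ K : ℕ, (B - μ • 1) ^ K *ᵥ w = 0 := by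
  have h : toLin' B - μ • 1 = toLin' (B - μ • 1) := by rw [map_sub, map_smul, toLin'_one]; rfl
  simp only [Module.End.mem_maxGenEigenspace, h, ← toLin'_pow, toLin'_apply]

theorem tendsto_exp_smul_mulVec_of_mem_maxGenEigenspace {B : Matrix n n ℂ} {μ : ℂ}
    (hμ : μ.re < 0) {w : n → ℂ} (hw : w ∈ Module.End.maxGenEigenspace (toLin' B) μ) :
    Tendsto (fun t : ℝ => exp (t • B) *ᵥ w) atTop (𝓝 0) := by
  obtain ⟨K, hK⟩ := (mem_maxGenEigenspace_toLin'_iff B μ w).1 hw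
  simp_rw [← Complex.coe_smul, exp_smul_mulVec_eq_sum B μ hK]
  simpa using tendsto_finsetSum (Finset.range K) fun k _ =>
    ((tendsto_ofReal_pow_mul_cexp_atTop hμ k).div_const _).smul_const ((B - μ • 1) ^ k *ᵥ w)

def stableSubspace (B : Matrix n n ℂ) : Submodule ℂ (n → ℂ) :=
  ⨆ μ : {μ : ℂ // μ.re < 0}, Module.End.maxGenEigenspace (toLin' B) μ

theorem tendsto_exp_smul_mulVec_of_mem_stableSubspace {B : Matrix n n ℂ} {x : n → ℂ}
    (hx : x ∈ stableSubspace B) : Tendsto (fun t : ℝ => exp (t • B) *ᵥ x) atTop (𝓝 0) := by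
  refine Submodule.iSup_induction _
    (motive := fun x => Tendsto (fun t : ℝ => exp (t • B) *ᵥ x) atTop (𝓝 0)) hx
    (fun μ w hw => tendsto_exp_smul_mulVec_of_mem_maxGenEigenspace μ.2 hw) (by simp)
    fun x y hx hy => ?_
  simpa [mulVec_add] using hx.add hy

theorem mulVec_mem_stableSubspace_of_commute {B C : Matrix n n ℂ} (h : Commute B C) {x : n → ℂ}
    (hx : x ∈ stableSubspace B) : C *ᵥ x ∈ stableSubspace B := by
  have hlin : Commute (toLin' B) (toLin' C) := h.map toLinAlgEquiv'
  refine (iSup_le fun μ y hy => ?_ : stableSubspace B ≤ (stableSubspace B).comap (toLin' C)) hx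
  exact Submodule.mem_iSup_of_mem μ (Module.End.mapsTo_maxGenEigenspace_of_comm hlin μ hy)

theorem stableSubspace_sup_stableSubspace_neg {B : Matrix n n ℂ}
    (hB : ∀ z ∈ spectrum ℂ B, z.re ≠ 0) : stableSubspace B ⊔ stableSubspace (-B) = ⊤ := by
  rw [eq_top_iff, ← Module.End.iSup_maxGenEigenspace_eq_top (toLin' B)]
  refine iSup_le fun μ => ?_
  rcases lt_trichotomy μ.re 0 with hμ | hμ | hμ
  · exact le_sup_of_le_left (le_iSup_of_le (ι := {μ : ℂ // μ.re < 0}) ⟨μ, hμ⟩ le_rfl)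
  · refine le_of_eq_of_le (not_not.1 fun hne => hB μ ?_ hμ) bot_le
    rw [← spectrum_toLin']
    exact ((Module.End.hasUnifEigenvalue_iff_hasUnifEigenvalue_one (by simp)).1 hne).mem_spectrum
  · refine le_sup_of_le_right (le_iSup_of_le (ι := {μ : ℂ // μ.re < 0}) ⟨-μ, by simpa using hμ⟩ ?_)
    rw [map_neg, Module.End.maxGenEigenspace_neg]

theorem exp_smul_neg_mul_exp_smul (B : Matrix n n ℂ) (t : ℝ) :
    exp (t • -B) * exp (t • B) = 1 := by
  rw [← exp_add_of_commute _ _ (((Commute.refl B).neg_left.smul_left t).smul_right t),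
    smul_neg, neg_add_cancel, exp_zero]

theorem tendsto_norm_exp_smul_mulVec_atTop_of_mem_stableSubspace_neg {B : Matrix n n ℂ}
    {x : n → ℂ} (hx : x ∈ stableSubspace (-B)) (hx0 : x ≠ 0) :
    Tendsto (fun t : ℝ => ‖exp (t • B) *ᵥ x‖) atTop atTop := by
  have hinv (t : ℝ) :
      MapsTo (mulVecLin (exp (t • B))) (stableSubspace (-B)) (stableSubspace (-B)) :=
    fun _ hy => mulVec_mem_stableSubspace_of_commute
      ((Commute.refl B).smul_right t).exp_right.neg_left hy
  have hleft (t : ℝ) (y : n → ℂ) : mulVecLin (exp (t • -B)) (mulVecLin (exp (t • B)) y) = y := by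
    rw [mulVecLin_apply, mulVecLin_apply, mulVec_mulVec, exp_smul_neg_mul_exp_smul, one_mulVec]
  exact Submodule.tendsto_norm_apply_atTop_of_leftInverse hinv hleft
    (fun _ hy => tendsto_exp_smul_mulVec_of_mem_stableSubspace hy) hx hx0

theorem tendsto_norm_exp_smul_mulVec_atTop_of_notMem_stableSubspace {B : Matrix n n ℂ}
    (hB : ∀ z ∈ spectrum ℂ B, z.re ≠ 0) {x : n → ℂ} (hx : x ∉ stableSubspace B) :
    Tendsto (fun t : ℝ => ‖exp (t • B) *ᵥ x‖) atTop atTop := by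
  obtain ⟨s, hs, u, hu, rfl⟩ := Submodule.mem_sup.1
    (stableSubspace_sup_stableSubspace_neg hB ▸ Submodule.mem_top : x ∈ _)
  have hu0 : u ≠ 0 := by rintro rfl; exact hx (by simpa using hs)
  have hs' := (tendsto_exp_smul_mulVec_of_mem_stableSubspace hs).norm
  rw [norm_zero] at hs'
  refine tendsto_atTop_mono (fun t => ?_)
    ((tendsto_norm_exp_smul_mulVec_atTop_of_mem_stableSubspace_neg hu hu0).atTop_add hs'.neg)
  have := norm_sub_le (exp (t • B) *ᵥ (s + u)) (exp (t • B) *ᵥ s)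
  rw [mulVec_add, add_sub_cancel_left] at this
  simp only [mulVec_add]
  linarith

theorem mem_stableSubspace_of_tendsto {B : Matrix n n ℂ} (hB : ∀ z ∈ spectrum ℂ B, z.re ≠ 0)
    {x : n → ℂ} (h : Tendsto (fun t : ℝ => exp (t • B) *ᵥ x) atTop (𝓝 0)) :
    x ∈ stableSubspace B := by
  by_contra hx
  exact not_tendsto_atTop_of_tendsto_nhds (by simpa using h.norm)
    (tendsto_norm_exp_smul_mulVec_atTop_of_notMem_stableSubspace hB hx)

theorem tendsto_exp_smul_mulVec_zero_or_norm_atTop {B : Matrix n n ℂ}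
    (hB : ∀ z ∈ spectrum ℂ B, z.re ≠ 0) (x : n → ℂ) :
    Tendsto (fun t : ℝ => exp (t • B) *ᵥ x) atTop (𝓝 0) ∨
      Tendsto (fun t : ℝ => ‖exp (t • B) *ᵥ x‖) atTop atTop :=
  (em (x ∈ stableSubspace B)).imp tendsto_exp_smul_mulVec_of_mem_stableSubspace
    (tendsto_norm_exp_smul_mulVec_atTop_of_notMem_stableSubspace hB)

theorem tendsto_exp_smul_mulVec_zero_or_norm_atBot {B : Matrix n n ℂ}
    (hB : ∀ z ∈ spectrum ℂ B, z.re ≠ 0) (x : n → ℂ) :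
    Tendsto (fun t : ℝ => exp (t • B) *ᵥ x) atBot (𝓝 0) ∨
      Tendsto (fun t : ℝ => ‖exp (t • B) *ᵥ x‖) atBot atTop := by
  rw [← tendsto_exp_smul_neg_atTop_iff B (· *ᵥ x), ← tendsto_exp_smul_neg_atTop_iff B (‖· *ᵥ x‖)]
  exact tendsto_exp_smul_mulVec_zero_or_norm_atTop (spectrum.re_ne_zero_of_neg hB) x

theorem tendsto_norm_exp_smul_mulVec_atTop_of_tendsto_atBot {B : Matrix n n ℂ}
    (hB : ∀ z ∈ spectrum ℂ B, z.re ≠ 0) {x : n → ℂ}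
    (h : Tendsto (fun t : ℝ => exp (t • B) *ᵥ x) atBot (𝓝 0)) (hx0 : x ≠ 0) :
    Tendsto (fun t : ℝ => ‖exp (t • B) *ᵥ x‖) atTop atTop := by
  rw [← tendsto_exp_smul_neg_atTop_iff B (· *ᵥ x)] at h
  exact tendsto_norm_exp_smul_mulVec_atTop_of_mem_stableSubspace_neg
    (mem_stableSubspace_of_tendsto (spectrum.re_ne_zero_of_neg hB) h) hx0

theorem tendsto_norm_exp_smul_mulVec_atBot_of_tendsto_atTop {B : Matrix n n ℂ}
    (hB : ∀ z ∈ spectrum ℂ B, z.re ≠ 0) {x : n → ℂ}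
    (h : Tendsto (fun t : ℝ => exp (t • B) *ᵥ x) atTop (𝓝 0)) (hx0 : x ≠ 0) :
    Tendsto (fun t : ℝ => ‖exp (t • B) *ᵥ x‖) atBot atTop := by
  rw [← tendsto_exp_smul_neg_atBot_iff B (· *ᵥ x)] at h
  rw [← tendsto_exp_smul_neg_atTop_iff B (‖· *ᵥ x‖)]
  exact tendsto_norm_exp_smul_mulVec_atTop_of_tendsto_atBot (spectrum.re_ne_zero_of_neg hB) h hx0

open scoped Norms.Operator in
theorem exp_map_algebraMap (M : Matrix n n ℝ) :
    exp (M.map (algebraMap ℝ ℂ)) = (exp M).map (algebraMap ℝ ℂ) :=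
  (map_exp (algebraMap ℝ ℂ).mapMatrix
    (continuous_id.matrix_map (continuous_algebraMap ℝ ℂ)) M).symm

theorem norm_exp_smul_map_mulVec (A : Matrix n n ℝ) (t : ℝ) (v : n → ℝ) :
    ‖exp (t • A.map (algebraMap ℝ ℂ)) *ᵥ (algebraMap ℝ ℂ ∘ v)‖ = ‖exp (t • A) *ᵥ v‖ := by
  have : t • A.map (algebraMap ℝ ℂ) = (t • A).map (algebraMap ℝ ℂ) := by ext; simp
  rw [this, exp_map_algebraMap, ← Pi.norm_algebraMap_comp (exp (t • A) *ᵥ v)]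
  congr 1
  ext i
  exact (RingHom.map_mulVec _ _ _ i).symm

end Matrix

open Matrix

/-- For a flow-hyperbolic matrix: solutions starting outside `E^s ∪ E^u` go to
infinity both in the future and in the past; nonzero solutions in `E^s` go to
infinity in the past; nonzero solutions in `E^u` go to infinity in the future. -/
theorem hyperbolic_solutions_diverge {d : ℕ} (A : Matrix (Fin d) (Fin d) ℝ)
    (hA : IsFlowHyperbolic A) :
    (∀ v : Fin d → ℝ, v ∉ stableSet A ∪ unstableSet A →
      Tendsto (fun t : ℝ => ‖(flowAt A t).mulVec v‖) atTop atTop ∧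
      Tendsto (fun t : ℝ => ‖(flowAt A t).mulVec v‖) atBot atTop) ∧
    (∀ v ∈ stableSet A, v ≠ 0 →
      Tendsto (fun t : ℝ => ‖(flowAt A t).mulVec v‖) atBot atTop) ∧
    (∀ v ∈ unstableSet A, v ≠ 0 →
      Tendsto (fun t : ℝ => ‖(flowAt A t).mulVec v‖) atTop atTop) := by
  set B := A.map (algebraMap ℝ ℂ)
  have hnorm (v : Fin d → ℝ) : (fun t : ℝ => ‖(flowAt A t).mulVec v‖) =
      fun t : ℝ => ‖exp (t • B) *ᵥ (algebraMap ℝ ℂ ∘ v)‖ :=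
    funext fun t => (norm_exp_smul_map_mulVec A t v).symm
  have hzero (v : Fin d → ℝ) (l : Filter ℝ) :
      Tendsto (fun t : ℝ => (flowAt A t).mulVec v) l (𝓝 0) ↔
        Tendsto (fun t : ℝ => exp (t • B) *ᵥ (algebraMap ℝ ℂ ∘ v)) l (𝓝 0) := by
    rw [tendsto_zero_iff_norm_tendsto_zero, hnorm, ← tendsto_zero_iff_norm_tendsto_zero]
  have hne {v : Fin d → ℝ} (hv : v ≠ 0) : algebraMap ℝ ℂ ∘ v ≠ 0 := by
    rwa [← norm_ne_zero_iff, Pi.norm_algebraMap_comp, norm_ne_zero_iff]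
  refine ⟨fun v hv => ⟨?_, ?_⟩, fun v hv hv0 => ?_, fun v hv hv0 => ?_⟩ <;> rw [hnorm]
  · exact (tendsto_exp_smul_mulVec_zero_or_norm_atTop hA _).resolve_left
      fun h => hv (.inl ((hzero v _).2 h))
  · exact (tendsto_exp_smul_mulVec_zero_or_norm_atBot hA _).resolve_left
      fun h => hv (.inr ((hzero v _).2 h))
  · exact tendsto_norm_exp_smul_mulVec_atBot_of_tendsto_atTop hA ((hzero v _).1 hv) (hne hv0)
  · exact tendsto_norm_exp_smul_mulVec_atTop_of_tendsto_atBot hA ((hzero v _).1 hv) (hne hv0)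
end

section
/- Let A and B be flow-hyperbolic real d×d matrices. Then there exists a C¹ diffeomorphism h : ℝ^d → ℝ^d such that h(exp(tA)·v) = exp(tB)·h(v) for all t ∈ ℝ and all v ∈ ℝ^d, if and only if there exists an invertible real d×d matrix P with B = P·A·P⁻¹. -/
/-!
Differentiating `h (exp (tA) v) = exp (tB) (h v)` in `v` at `v = 0` shows that the Jacobian
matrix `J` of `h` at the origin satisfies `J exp (tA) = exp (tB) J` for every `t`; by the chain
rule applied to `h⁻¹ ∘ h` it is invertible, and differentiating in `t` at `t = 0` gives
`J A = B J`. Conversely, a similarity `B = P A P⁻¹` also conjugates the exponentials, so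
`v ↦ P v` is a linear conjugacy of the flows.
-/

open Filter Topology

open NormedSpace

theorem semiconjBy_exp_smul_iff {𝕂 𝔸 : Type*} [RCLike 𝕂] [NormedRing 𝔸] [NormedAlgebra 𝕂 𝔸]
    [CompleteSpace 𝔸] {m a b : 𝔸} :
    (∀ t : 𝕂, SemiconjBy m (exp (t • a)) (exp (t • b))) ↔ SemiconjBy m a b := by
  let _ : NormedAlgebra ℚ 𝔸 := NormedAlgebra.restrictScalars ℚ 𝕂 𝔸
  refine ⟨fun h => ?_, fun h t => (h.smul_right t).exp_right⟩
  have hl : HasDerivAt (fun t : 𝕂 => m * exp (t • a)) (m * a) 0 := by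
    simpa using (hasDerivAt_exp_smul_const (𝕂 := 𝕂) a 0).const_mul m
  have hr : HasDerivAt (fun t : 𝕂 => exp (t • b) * m) (b * m) 0 := by
    simpa using (hasDerivAt_exp_smul_const (𝕂 := 𝕂) b 0).mul_const m
  rw [show (fun t : 𝕂 => m * exp (t • a)) = _ from funext fun t => (h t).eq] at hl
  exact hl.unique hr

theorem semiconjBy_flowAt_iff {d : ℕ} {M A B : Matrix (Fin d) (Fin d) ℝ} :
    (∀ t, SemiconjBy M (flowAt A t) (flowAt B t)) ↔ SemiconjBy M A B := by
  let _ := Matrix.linftyOpNormedRing (n := Fin d) (α := ℝ)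
  let _ := Matrix.linftyOpNormedAlgebra (n := Fin d) (R := ℝ) (α := ℝ)
  exact semiconjBy_exp_smul_iff

theorem Matrix.semiconjBy_iff_eq_mul_mul_inv {n α : Type*} [Fintype n] [DecidableEq n]
    [CommRing α] {P A B : Matrix n n α} (hP : IsUnit P.det) :
    SemiconjBy P A B ↔ B = P * A * P⁻¹ := by
  let _ := P.invertibleOfIsUnitDet hP
  rw [SemiconjBy, eq_comm (a := B), Matrix.mul_inv_eq_iff_eq_mul_of_invertible P]

section FDeriv

variable {𝕜 E F : Type*} [NontriviallyNormedField 𝕜] [NormedAddCommGroup E] [NormedSpace 𝕜 E]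
  [NormedAddCommGroup F] [NormedSpace 𝕜 F]

theorem fderiv_comp_fderiv_of_leftInverse {f : E → F} {g : F → E}
    (hgf : Function.LeftInverse g f) {x : E} (hg : DifferentiableAt 𝕜 g (f x))
    (hf : DifferentiableAt 𝕜 f x) :
    (fderiv 𝕜 g (f x)).comp (fderiv 𝕜 f x) = ContinuousLinearMap.id 𝕜 E := by
  rw [← fderiv_comp x hg hf, hgf.comp_eq_id, fderiv_id]

theorem fderiv_zero_comp_eq_comp_fderiv_zero {f : E → F} {L : E →L[𝕜] E} {L' : F →L[𝕜] F}
    (hf : DifferentiableAt 𝕜 f 0) (h : ∀ v, f (L v) = L' (f v)) :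
    (fderiv 𝕜 f 0).comp L = L'.comp (fderiv 𝕜 f 0) := by
  have hL : HasFDerivAt (f ∘ L) ((fderiv 𝕜 f 0).comp L) 0 :=
    HasFDerivAt.comp 0 (by rw [map_zero]; exact hf.hasFDerivAt) L.hasFDerivAt
  have hL' : HasFDerivAt (L' ∘ f) (L'.comp (fderiv 𝕜 f 0)) 0 :=
    L'.hasFDerivAt.comp 0 hf.hasFDerivAt
  rw [show f ∘ L = L' ∘ f from funext h] at hL
  exact hL.unique hL'

end FDeriv

section Jacobian

variable {𝕜 m n : Type*} [NontriviallyNormedField 𝕜] [Fintype m] [DecidableEq m] [Fintype n]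
  [DecidableEq n]

theorem toMatrix'_fderiv_mul_eq_mul_toMatrix'_fderiv [CompleteSpace 𝕜] {f : (m → 𝕜) → (n → 𝕜)}
    {X : Matrix m m 𝕜} {Y : Matrix n n 𝕜} (hf : DifferentiableAt 𝕜 f 0)
    (h : ∀ v, f (X.mulVec v) = Y.mulVec (f v)) :
    LinearMap.toMatrix' (fderiv 𝕜 f 0 : (m → 𝕜) →ₗ[𝕜] n → 𝕜) * X =
      Y * LinearMap.toMatrix' (fderiv 𝕜 f 0 : (m → 𝕜) →ₗ[𝕜] n → 𝕜) := by
  have hcomm := fderiv_zero_comp_eq_comp_fderiv_zero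
    (L := LinearMap.toContinuousLinearMap X.mulVecLin)
    (L' := LinearMap.toContinuousLinearMap Y.mulVecLin) hf h
  have := congrArg (fun L : (m → 𝕜) →L[𝕜] n → 𝕜 => LinearMap.toMatrix' (L : (m → 𝕜) →ₗ[𝕜] n → 𝕜))
    hcomm
  simpa [LinearMap.toMatrix'_comp, ← Matrix.toLin'_apply'] using this

theorem isUnit_det_toMatrix'_fderiv (e : (n → 𝕜) ≃ (n → 𝕜)) {x : n → 𝕜}
    (he : DifferentiableAt 𝕜 e x) (he' : DifferentiableAt 𝕜 e.symm (e x)) :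
    IsUnit (LinearMap.toMatrix' (fderiv 𝕜 e x : (n → 𝕜) →ₗ[𝕜] n → 𝕜)).det := by
  refine Matrix.isUnit_det_of_left_inverse
    (B := LinearMap.toMatrix' (fderiv 𝕜 e.symm (e x) : (n → 𝕜) →ₗ[𝕜] n → 𝕜)) ?_
  rw [← LinearMap.toMatrix'_comp, ← ContinuousLinearMap.toLinearMap_comp,
    fderiv_comp_fderiv_of_leftInverse (f := e) e.symm_apply_apply he' he]
  exact LinearMap.toMatrix'_id

end Jacobian

theorem flow_smoothly_conjugate_iff_similar_general {d : ℕ}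
    (A B : Matrix (Fin d) (Fin d) ℝ) :
    (∃ h : (Fin d → ℝ) ≃ (Fin d → ℝ),
      ContDiff ℝ 1 h ∧ ContDiff ℝ 1 h.symm ∧
      ∀ (t : ℝ) (v : Fin d → ℝ),
        h ((flowAt A t).mulVec v) = (flowAt B t).mulVec (h v)) ↔
    (∃ P : Matrix (Fin d) (Fin d) ℝ, IsUnit P.det ∧ B = P * A * P⁻¹) := by
  constructor
  · rintro ⟨h, hc, hc', hconj⟩
    have hd : DifferentiableAt ℝ h 0 := hc.differentiable one_ne_zero 0
    have hJ := isUnit_det_toMatrix'_fderiv h hd (hc'.differentiable one_ne_zero _)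
    refine ⟨_, hJ, (Matrix.semiconjBy_iff_eq_mul_mul_inv hJ).1 ?_⟩
    exact semiconjBy_flowAt_iff.1 fun t => toMatrix'_fderiv_mul_eq_mul_toMatrix'_fderiv hd (hconj t)
  · rintro ⟨P, hP, hB⟩
    have hflow := semiconjBy_flowAt_iff.2 ((Matrix.semiconjBy_iff_eq_mul_mul_inv hP).2 hB)
    let e := (P.toLinearEquiv' (P.invertibleOfIsUnitDet hP)).toContinuousLinearEquiv
    refine ⟨e.toEquiv, e.contDiff, e.symm.contDiff, fun t v => ?_⟩
    change P.mulVec _ = (flowAt B t).mulVec (P.mulVec v)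
    rw [Matrix.mulVec_mulVec, Matrix.mulVec_mulVec, (hflow t).eq]

/-- Two hyperbolic linear flows are conjugate by a C¹ diffeomorphism if and
only if the generating matrices are similar (conjugate by an invertible
matrix). -/
theorem flow_smoothly_conjugate_iff_similar {d : ℕ}
    (A B : Matrix (Fin d) (Fin d) ℝ)
    (hA : IsFlowHyperbolic A) (hB : IsFlowHyperbolic B) :
    (∃ h : (Fin d → ℝ) ≃ (Fin d → ℝ),
      ContDiff ℝ 1 h ∧ ContDiff ℝ 1 h.symm ∧
      ∀ (t : ℝ) (v : Fin d → ℝ),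
        h ((flowAt A t).mulVec v) = (flowAt B t).mulVec (h v)) ↔
    (∃ P : Matrix (Fin d) (Fin d) ℝ, IsUnit P.det ∧ B = P * A * P⁻¹) :=
  flow_smoothly_conjugate_iff_similar_general A B
end

section
/- The torus automorphism f_A induced by the matrix [[2,1],[1,1]] is transitive: there exists a point z ∈ T² whose forward orbit {f_A^n(z) : n ∈ ℕ} is dense in T². -/
open Filter Topology

/-- The 2-torus `T² = (ℝ/ℤ) × (ℝ/ℤ)`. -/
abbrev Torus2 := UnitAddCircle × UnitAddCircle

/-- The torus automorphism induced by the linear map `A(x,y) = (2x+y, x+y)`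
of `ℝ²` (which preserves the lattice `ℤ²` and hence descends to the
quotient). -/
noncomputable def torusCatMap (p : Torus2) : Torus2 :=
  (2 • p.1 + p.2, p.1 + p.2)

/-!
The matrix `[[2,1],[1,1]]` has the eigenvalue `φ²` with eigenvector `(φ, 1)`, and since `φ` is
irrational the projection of the unstable line `ℝ • (φ, 1)` is dense in `T²`. By compactness of
`T²`, a bounded piece of every translate of this line meets a given nonempty open set `V`. A short
unstable segment through a point of an open set `U` is stretched by `f_A^n` onto such a piece, so
`f_A^n U` meets `V` for some `n`; Birkhoff's Baire-category argument then produces a point with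
dense forward orbit.
-/

open Set Function Real goldenRatio

theorem exists_dense_orbit_of_topologicallyTransitive {X : Type*} [TopologicalSpace X]
    [SecondCountableTopology X] [BaireSpace X] [Nonempty X] {f : X → X} (hf : Continuous f)
    (h : ∀ U V : Set X, IsOpen U → U.Nonempty → IsOpen V → V.Nonempty →
      ∃ n : ℕ, (U ∩ f^[n] ⁻¹' V).Nonempty) :
    ∃ z : X, Dense (range fun n : ℕ => f^[n] z) := by
  obtain ⟨B, hBc, hB0, hB⟩ := TopologicalSpace.exists_countable_basis X
  have hopen : ∀ V ∈ B, IsOpen (⋃ n : ℕ, f^[n] ⁻¹' V) := fun V hV =>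
    isOpen_iUnion fun n => (hB.isOpen hV).preimage (hf.iterate n)
  have hdense : ∀ V ∈ B, Dense (⋃ n : ℕ, f^[n] ⁻¹' V) := fun V hV =>
    dense_iff_inter_open.2 fun U hU hUne => by
      obtain ⟨n, x, hxU, hxV⟩ := h U V hU hUne (hB.isOpen hV)
        (nonempty_iff_ne_empty.2 (ne_of_mem_of_not_mem hV hB0))
      exact ⟨x, hxU, mem_iUnion.2 ⟨n, hxV⟩⟩
  obtain ⟨z, hz⟩ := (dense_biInter_of_isOpen hopen hBc hdense).nonempty
  refine ⟨z, hB.dense_iff.2 fun V hV hVne => ?_⟩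
  obtain ⟨n, hn⟩ := mem_iUnion.1 (mem_iInter₂.1 hz V hV)
  exact ⟨f^[n] z, hn, n, rfl⟩

theorem DenseRange.exists_finset_forall_add_mem {G ι : Type*} [AddGroup G] [TopologicalSpace G]
    [ContinuousAdd G] [CompactSpace G] {g : ι → G} (hg : DenseRange g) {V : Set G}
    (hV : IsOpen V) (hVne : V.Nonempty) : ∃ F : Finset ι, ∀ p : G, ∃ i ∈ F, p + g i ∈ V := by
  have hcover : univ ⊆ ⋃ i, (· + g i) ⁻¹' V := fun p _ => by
    obtain ⟨v, hv⟩ := hVne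
    obtain ⟨i, hi⟩ := hg.exists_mem_open (hV.preimage (continuous_const_add p))
      ⟨-p + v, by simpa⟩
    exact mem_iUnion.2 ⟨i, hi⟩
  obtain ⟨F, hF⟩ := isCompact_univ.elim_finite_subcover _
    (fun i => hV.preimage (continuous_add_const (g i))) hcover
  exact ⟨F, fun p => by simpa using hF (mem_univ p)⟩

theorem continuous_torusCatMap : Continuous torusCatMap := by
  unfold torusCatMap
  fun_prop

noncomputable def torusProj : ℝ × ℝ → Torus2 := Prod.map (↑) (↑)

theorem continuous_torusProj : Continuous torusProj :=
  continuous_quotient_mk'.prodMap continuous_quotient_mk'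

theorem torusProj_surjective : Surjective torusProj :=
  QuotientAddGroup.mk_surjective.prodMap QuotientAddGroup.mk_surjective

theorem torusProj_add (u v : ℝ × ℝ) : torusProj (u + v) = torusProj u + torusProj v := rfl

theorem denseRange_torusProj_smul {α : ℝ} (hα : Irrational α) :
    DenseRange fun t : ℝ => torusProj (t • (α, 1)) := by
  -- The line contains the image of the dense set `ℤ • α × ℝ` under this continuous surjection.
  set g : UnitAddCircle × ℝ → Torus2 := fun p => (p.1 + ↑(p.2 * α), ↑p.2)
  have hg : Continuous g := by fun_prop
  have hg_surj : Surjective g := by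
    rintro ⟨x, y⟩
    obtain ⟨b, rfl⟩ := QuotientAddGroup.mk_surjective y
    exact ⟨(x - ↑(b * α), b), by simp [g]⟩
  have hmult : DenseRange fun k : ℤ => k • (α : UnitAddCircle) :=
    AddCircle.denseRange_zsmul_coe_iff.2 (by simpa using hα)
  refine (hg_surj.denseRange.dense_image hg (hmult.prod dense_univ)).mono ?_
  rintro _ ⟨⟨_, t⟩, ⟨⟨k, rfl⟩, -⟩, rfl⟩
  refine ⟨t + k, ?_⟩
  simp [g, torusProj, add_mul, add_comm]

noncomputable def catLift : Module.End ℝ (ℝ × ℝ) :=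
  (2 • LinearMap.fst ℝ ℝ ℝ + LinearMap.snd ℝ ℝ ℝ).prod (LinearMap.fst ℝ ℝ ℝ + LinearMap.snd ℝ ℝ ℝ)

theorem catLift_apply (u : ℝ × ℝ) : catLift u = (2 * u.1 + u.2, u.1 + u.2) := by
  simp [catLift, two_mul]

theorem semiconj_torusProj_catLift : Semiconj torusProj catLift torusCatMap := fun u => by
  simp [catLift_apply, torusProj, torusCatMap, two_smul, two_mul]

theorem catLift_hasEigenvector : catLift.HasEigenvector (φ ^ 2) (φ, 1) := by
  refine ⟨Module.End.mem_eigenspace_iff.2 ?_, by simp⟩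
  rw [catLift_apply, Prod.smul_mk, smul_eq_mul, smul_eq_mul, Prod.mk.injEq]
  exact ⟨by linear_combination -(φ + 1) * goldenRatio_sq, by linear_combination -goldenRatio_sq⟩

noncomputable def unstableLine (t : ℝ) : Torus2 := torusProj (t • (φ, 1))

theorem continuous_unstableLine : Continuous unstableLine :=
  continuous_torusProj.comp (continuous_id.smul continuous_const)

theorem denseRange_unstableLine : DenseRange unstableLine :=
  denseRange_torusProj_smul goldenRatio_irrational

theorem torusCatMap_iterate_add_unstableLine (n : ℕ) (p : Torus2) (t : ℝ) :
    torusCatMap^[n] (p + unstableLine t) = torusCatMap^[n] p + unstableLine ((φ ^ 2) ^ n * t) := by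
  obtain ⟨u, rfl⟩ := torusProj_surjective p
  have h := semiconj_torusProj_catLift.iterate_right n
  rw [unstableLine, unstableLine, ← torusProj_add, ← h.eq, ← h.eq, ← Module.End.coe_pow, map_add,
    map_smul, catLift_hasEigenvector.pow_apply, smul_smul, mul_comm, torusProj_add]

theorem exists_bound_forall_add_unstableLine_mem {V : Set Torus2} (hV : IsOpen V)
    (hVne : V.Nonempty) : ∃ T : ℝ, ∀ p : Torus2, ∃ t : ℝ, |t| ≤ T ∧ p + unstableLine t ∈ V := by
  obtain ⟨F, hF⟩ := denseRange_unstableLine.exists_finset_forall_add_mem hV hVne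
  obtain ⟨T, hT⟩ := (F.image abs).exists_le
  refine ⟨T, fun p => ?_⟩
  obtain ⟨t, ht, hpt⟩ := hF p
  exact ⟨t, hT _ (Finset.mem_image_of_mem _ ht), hpt⟩

theorem torusCatMap_exists_iterate_inter_nonempty {U V : Set Torus2} (hU : IsOpen U)
    (hUne : U.Nonempty) (hV : IsOpen V) (hVne : V.Nonempty) :
    ∃ n : ℕ, (U ∩ torusCatMap^[n] ⁻¹' V).Nonempty := by
  obtain ⟨p, hp⟩ := hUne
  obtain ⟨T, hT⟩ := exists_bound_forall_add_unstableLine_mem hV hVne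
  choose σ hσT hσV using hT
  have hc : 1 < φ ^ 2 := one_lt_pow₀ one_lt_goldenRatio two_ne_zero
  have hcn (n : ℕ) : 0 < (φ ^ 2) ^ n := pow_pos (zero_lt_one.trans hc) n
  set t : ℕ → ℝ := fun n => σ (torusCatMap^[n] p) / (φ ^ 2) ^ n
  have ht : Tendsto t atTop (𝓝 0) := by
    refine squeeze_zero_norm (fun n => ?_)
      ((tendsto_const_nhds (x := T)).div_atTop (tendsto_pow_atTop_atTop_of_one_lt hc))
    rw [Real.norm_eq_abs, abs_div, abs_of_pos (hcn n)]
    exact div_le_div_of_nonneg_right (hσT _) (hcn n).le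
  have hpU : ∀ᶠ n in atTop, p + unstableLine (t n) ∈ U :=
    ((continuous_const.add continuous_unstableLine).tendsto' 0 p (by simp only [Pi.add_apply, unstableLine, zero_smul]; exact add_zero p)
      |>.comp ht).eventually (hU.mem_nhds hp)
  obtain ⟨n, hn⟩ := hpU.exists
  refine ⟨n, _, hn, ?_⟩
  rw [mem_preimage, torusCatMap_iterate_add_unstableLine, mul_div_cancel₀ _ (hcn n).ne']
  exact hσV _

/-- The torus automorphism induced by `[[2,1],[1,1]]` is transitive: some
point has dense forward orbit. -/
theorem torusCatMap_transitive :
    ∃ z : Torus2, Dense (Set.range fun n : ℕ => torusCatMap^[n] z) :=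
  exists_dense_orbit_of_topologicallyTransitive continuous_torusCatMap
    fun _ _ hU hUne hV hVne => torusCatMap_exists_iterate_inter_nonempty hU hUne hV hVne
end

section
/- Let f : ℝ^d → ℝ^d be a C¹ diffeomorphism with a fixed point p such that Df_p is invertible and map-hyperbolic. Then there exist β > 0, C > 0 and 0 < λ < 1 such that every x in the local stable set W^s_β(p) satisfies ‖f^n(x) - p‖ ≤ C·λ^n·‖x - p‖ for all n ≥ 0; consequently, a point z ∈ ℝ^d satisfies f^n(z) → p as n → ∞ if and only if f^n(z) ∈ W^s_β(p) for some n ≥ 0. -/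
/-!
Near the fixed point, `f` is a small perturbation of `Df_p`: an orbit that stays in a small ball
around `p` is, after translating `p` to `0`, a pseudo-orbit of `Df_p` with small relative error.
Complexify and split `ℂ^d` into the sums of the generalized eigenspaces of `Df_p` for eigenvalues
inside and outside the unit circle. Adapted norms on the two pieces make `Df_p` a strict
contraction on the first and a strict expansion on the second. A bounded pseudo-orbit can then
never let its unstable component dominate, since from that moment on it would grow geometrically;
so the stable component dominates and decays geometrically. An orbit converging to `p` eventually
stays in the `β`-ball, which gives the description of the stable set.
-/

open Filter Topology

/-- A real d×d matrix is *map-hyperbolic* if no eigenvalue of its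
complexification has modulus 1. -/
def IsMapHyperbolic {d : ℕ} (C : Matrix (Fin d) (Fin d) ℝ) : Prop :=
  ∀ z ∈ spectrum ℂ (C.map (algebraMap ℝ ℂ)), ‖z‖ ≠ 1

/-- The derivative of `f` at `p`, as a d×d matrix. -/
noncomputable def derivMatrix {d : ℕ} (f : (Fin d → ℝ) → (Fin d → ℝ))
    (p : Fin d → ℝ) : Matrix (Fin d) (Fin d) ℝ :=
  LinearMap.toMatrix' ((fderiv ℝ f p : (Fin d → ℝ) →ₗ[ℝ] (Fin d → ℝ)))

/-- The local stable set of size `β` of a fixed point `p`. -/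
def localStableSet {d : ℕ} (f : (Fin d → ℝ) → (Fin d → ℝ))
    (p : Fin d → ℝ) (β : ℝ) : Set (Fin d → ℝ) :=
  {x | ∀ n : ℕ, ‖f^[n] x - p‖ ≤ β}

open scoped Matrix

namespace Module.End

variable {K V : Type*} [Field K] [AddCommGroup V] [Module K V] (f : End K V)

def spectralSubspace (s : Set K) : Submodule K V :=
  ⨆ μ ∈ s, f.maxGenEigenspace μ

theorem mapsTo_spectralSubspace (s : Set K) :
    ∀ v ∈ f.spectralSubspace s, f v ∈ f.spectralSubspace s := by
  suffices f.spectralSubspace s ≤ (f.spectralSubspace s).comap f from fun v hv ↦ this hv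
  refine iSup₂_le fun μ hμ v hv ↦ ?_
  exact le_biSup (fun μ ↦ f.maxGenEigenspace μ) hμ
    (mapsTo_maxGenEigenspace_of_comm (Commute.refl f) μ hv)

theorem disjoint_spectralSubspace {s t : Set K} (hst : Disjoint s t) :
    Disjoint (f.spectralSubspace s) (f.spectralSubspace t) :=
  (independent_maxGenEigenspace f).disjoint_biSup_biSup hst

theorem codisjoint_spectralSubspace [IsAlgClosed K] [FiniteDimensional K V] {s t : Set K}
    (hst : ∀ μ, f.HasEigenvalue μ → μ ∈ s ∪ t) :
    Codisjoint (f.spectralSubspace s) (f.spectralSubspace t) := by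
  rw [codisjoint_iff, eq_top_iff, ← iSup_maxGenEigenspace_eq_top f]
  refine iSup_le fun μ ↦ ?_
  by_cases hμ : f.HasEigenvalue μ
  · rcases hst μ hμ with hs | ht
    · exact le_sup_of_le_left (le_biSup (fun μ ↦ f.maxGenEigenspace μ) hs)
    · exact le_sup_of_le_right (le_biSup (fun μ ↦ f.maxGenEigenspace μ) ht)
  · have : f.maxGenEigenspace μ = ⊥ := by
      by_contra h
      exact hμ ((hasUnifEigenvalue_iff_hasUnifEigenvalue_one (by simp)).mp h)
    simp [this]

theorem mem_of_hasEigenvalue_restrict_spectralSubspace {s : Set K} {μ : K}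
    (h : HasEigenvalue (f.restrict (f.mapsTo_spectralSubspace s)) μ) : μ ∈ s := by
  by_contra hμ
  exact h (eigenspace_restrict_eq_bot _
    (((independent_maxGenEigenspace f).disjoint_biSup hμ).mono_left
      eigenspace_le_maxGenEigenspace))

theorem HasEigenvalue.inv_of_symm {e : V ≃ₗ[K] V} {z : K}
    (h : HasEigenvalue (e.symm : End K V) z) : HasEigenvalue (e : End K V) z⁻¹ := by
  obtain ⟨w, hw⟩ := h.exists_hasEigenvector
  have hw' : w = z • e w := by
    calc w = e (e.symm w) := (e.apply_symm_apply w).symm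
      _ = z • e w := by rw [← map_smul, ← hw.apply_eq_smul]; rfl
  have hz : z ≠ 0 := by
    rintro rfl
    exact hw.2 (by simpa using hw')
  refine hasEigenvalue_of_hasEigenvector ⟨mem_eigenspace_iff.mpr ?_, hw.2⟩
  conv_rhs => rw [hw']
  rw [smul_smul, inv_mul_cancel₀ hz, one_smul]
  rfl

theorem exists_linearEquiv_restrict_spectralSubspace [FiniteDimensional K V] {s : Set K}
    (hs : (0 : K) ∉ s) :
    ∃ e : f.spectralSubspace s ≃ₗ[K] f.spectralSubspace s,
      (e : End K (f.spectralSubspace s)) = f.restrict (f.mapsTo_spectralSubspace s) ∧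
        ∀ z, HasEigenvalue (e.symm : End K (f.spectralSubspace s)) z → z⁻¹ ∈ s := by
  have hinj : Function.Injective (f.restrict (f.mapsTo_spectralSubspace s)) :=
    (injective_iff_map_eq_zero _).mpr fun w hw ↦ by
      by_contra hw0
      exact hs (f.mem_of_hasEigenvalue_restrict_spectralSubspace
        (hasEigenvalue_of_hasEigenvector ⟨by simpa [mem_eigenspace_iff] using hw, hw0⟩))
  refine ⟨LinearEquiv.ofInjectiveEndo _ hinj, rfl, fun z hz ↦ ?_⟩
  exact f.mem_of_hasEigenvalue_restrict_spectralSubspace hz.inv_of_symm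

theorem isCompl_spectralSubspace {E : Type*} [AddCommGroup E] [Module ℂ E]
    [FiniteDimensional ℂ E] (T : End ℂ E)
    (hT : ∀ z ∈ spectrum ℂ T, ‖z‖ ≠ 1) :
    IsCompl (T.spectralSubspace {z | ‖z‖ < 1}) (T.spectralSubspace {z | 1 < ‖z‖}) :=
  ⟨T.disjoint_spectralSubspace
      (Set.disjoint_left.mpr fun _ (h₁ : ‖_‖ < 1) (h₂ : 1 < ‖_‖) ↦ lt_asymm h₁ h₂),
    T.codisjoint_spectralSubspace fun z hz ↦ (hT z (hasEigenvalue_iff_mem_spectrum.mp hz)).lt_or_gt⟩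

theorem hasEigenvalue_iff_mem_spectrum_toContinuousLinearMap {𝕜 E : Type*}
    [NontriviallyNormedField 𝕜] [CompleteSpace 𝕜] [NormedAddCommGroup E] [NormedSpace 𝕜 E]
    [FiniteDimensional 𝕜 E] {f : End 𝕜 E} {z : 𝕜} :
    f.HasEigenvalue z ↔ z ∈ spectrum 𝕜 (toContinuousLinearMap E f) := by
  rw [AlgEquiv.spectrum_eq, hasEigenvalue_iff_mem_spectrum]

end Module.End

theorem Submodule.projectionOnto_apply_eq_restrict {R E : Type*} [Ring R] [AddCommGroup E]
    [Module R E] {p q : Submodule R E} (h : IsCompl p q) {f : E →ₗ[R] E}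
    (hp : ∀ x ∈ p, f x ∈ p) (hq : ∀ x ∈ q, f x ∈ q) (v : E) :
    p.projectionOnto q h (f v) = f.restrict hp (p.projectionOnto q h v) := by
  conv_lhs => rw [← projection_add_projection_eq_self h v]
  rw [map_add, map_add,
    projectionOnto_apply_of_mem_left h (hp _ (projection_apply_mem h v)),
    projectionOnto_apply_of_mem_right h (hq _ (projection_apply_mem h.symm v)), add_zero]
  rfl

open scoped NNReal ENNReal in
theorem spectrum.exists_norm_pow_le_pow_of_forall_norm_lt_one {A : Type*} [NormedRing A]
    [NormedAlgebra ℂ A] [CompleteSpace A] (a : A) (ha : ∀ z ∈ spectrum ℂ a, ‖z‖ < 1) :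
    ∃ m, 0 < m ∧ ∃ lam : ℝ, 0 < lam ∧ lam < 1 ∧ ‖a ^ m‖ ≤ lam ^ m := by
  rcases subsingleton_or_nontrivial A with hA | hA
  · exact ⟨1, one_pos, 1 / 2, by norm_num, by norm_num, by simp [Subsingleton.elim (a ^ 1) 0]⟩
  have hρ : spectralRadius ℂ a < (1 : ℝ≥0) :=
    spectrum.spectralRadius_lt_of_forall_lt a fun z hz ↦ by exact_mod_cast ha z hz
  obtain ⟨l, hρl, hl1⟩ := ENNReal.lt_iff_exists_nnreal_btwn.mp hρ
  have hl0 : 0 < l := by simpa using pos_of_gt hρl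
  obtain ⟨m, hm, hm1⟩ := ((pow_nnnorm_pow_one_div_tendsto_nhds_spectralRadius a).eventually
    (gt_mem_nhds hρl) |>.and (eventually_ge_atTop 1)).exists
  refine ⟨m, hm1, l, hl0, by exact_mod_cast hl1, ?_⟩
  have : (‖a ^ m‖₊ : ℝ≥0∞) < (l : ℝ≥0∞) ^ m := by
    have := ENNReal.rpow_lt_rpow hm (by positivity : (0 : ℝ) < m)
    rwa [← ENNReal.rpow_mul, one_div, inv_mul_cancel₀ (by positivity), ENNReal.rpow_one,
      ENNReal.rpow_natCast] at this
  exact_mod_cast this.le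

section AdaptedNorm

variable {𝕜 W : Type*} [NontriviallyNormedField 𝕜] [SeminormedAddCommGroup W] [NormedSpace 𝕜 W]

/-- A Lyapunov norm for `a`: once `m` steps of `a` contract the norm by `lam ^ m`, a single step
contracts this one by `lam` (`adaptedNorm_apply_le`). -/
noncomputable def adaptedNorm (a : W →L[𝕜] W) (m : ℕ) (lam : ℝ) (w : W) : ℝ :=
  ∑ k ∈ Finset.range m, ‖(a ^ k) w‖ / lam ^ k

variable {a : W →L[𝕜] W} {m : ℕ} {lam : ℝ}

theorem adaptedNorm_nonneg (hlam : 0 ≤ lam) (w : W) : 0 ≤ adaptedNorm a m lam w :=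
  Finset.sum_nonneg fun k _ ↦ by positivity

theorem norm_le_adaptedNorm (hlam : 0 ≤ lam) (hm : 0 < m) (w : W) :
    ‖w‖ ≤ adaptedNorm a m lam w := by
  calc ‖w‖ = ‖(a ^ 0) w‖ / lam ^ 0 := by simp
    _ ≤ adaptedNorm a m lam w :=
      Finset.single_le_sum (f := fun k ↦ ‖(a ^ k) w‖ / lam ^ k) (fun k _ ↦ by positivity)
        (Finset.mem_range.mpr hm)

theorem adaptedNorm_add_le (hlam : 0 ≤ lam) (v w : W) :
    adaptedNorm a m lam (v + w) ≤ adaptedNorm a m lam v + adaptedNorm a m lam w := by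
  simp only [adaptedNorm, ← Finset.sum_add_distrib, ← add_div, map_add]
  gcongr
  exact norm_add_le _ _

theorem adaptedNorm_le (hlam : 0 ≤ lam) (w : W) :
    adaptedNorm a m lam w ≤ (∑ k ∈ Finset.range m, ‖a ^ k‖ / lam ^ k) * ‖w‖ := by
  simp only [adaptedNorm, Finset.sum_mul, div_mul_eq_mul_div]
  gcongr
  exact (a ^ _).le_opNorm w

theorem adaptedNorm_apply_le (hlam : 0 < lam) (ha : ‖a ^ m‖ ≤ lam ^ m) (w : W) :
    adaptedNorm a m lam (a w) ≤ lam * adaptedNorm a m lam w := by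
  set g : ℕ → ℝ := fun k ↦ ‖(a ^ k) w‖ / lam ^ k with hg
  have hshift : adaptedNorm a m lam (a w) = lam * ∑ k ∈ Finset.range m, g (k + 1) := by
    rw [adaptedNorm, Finset.mul_sum]
    refine Finset.sum_congr rfl fun k _ ↦ ?_
    have : (a ^ k) (a w) = (a ^ (k + 1)) w := by rw [pow_succ]; rfl
    rw [this]
    simp only [hg, pow_succ lam]
    field_simp
  have hgm : g m ≤ g 0 := by
    simpa [g, div_le_iff₀ (pow_pos hlam m), mul_comm] using (a ^ m).le_of_opNorm_le ha w
  have htelescope := Finset.sum_range_succ' g m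
  rw [Finset.sum_range_succ] at htelescope
  rw [hshift, adaptedNorm]
  exact mul_le_mul_of_nonneg_left (by linarith) hlam.le

end AdaptedNorm

theorem le_of_cone_recurrence {σ υ : ℕ → ℝ} {lamS κ c B : ℝ} (hc : 0 ≤ c)
    (hs : lamS + 2 * c < 1) (hu : 1 < κ - 2 * c) (hσ0 : ∀ n, 0 ≤ σ n) (hυB : ∀ n, υ n ≤ B)
    (hσ : ∀ n, σ (n + 1) ≤ lamS * σ n + c * (σ n + υ n))
    (hυ : ∀ n, κ * υ n ≤ υ (n + 1) + c * (σ n + υ n)) (n : ℕ) : υ n ≤ σ n := by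
  by_contra! hn
  -- once `υ` dominates `σ`, it keeps dominating and grows geometrically, contradicting `υ ≤ B`
  have hstep : ∀ k, σ k < υ k → σ (k + 1) < υ (k + 1) ∧ (κ - 2 * c) * υ k ≤ υ (k + 1) := by
    intro k hk
    have := hσ k; have := hυ k; have := hσ0 k
    constructor <;> nlinarith
  have hgrow : ∀ j, σ (n + j) < υ (n + j) ∧ (κ - 2 * c) ^ j * υ n ≤ υ (n + j) := by
    intro j
    induction j with
    | zero => simpa using hn
    | succ j ih =>
      obtain ⟨hlt, hexp⟩ := hstep _ ih.1
      refine ⟨hlt, ?_⟩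
      rw [pow_succ', mul_assoc]
      exact (mul_le_mul_of_nonneg_left ih.2 (by linarith)).trans hexp
  have hυn : 0 < υ n := (hσ0 n).trans_lt hn
  obtain ⟨j, hj⟩ := pow_unbounded_of_one_lt (B / υ n) hu
  have := (hgrow j).2.trans (hυB (n + j))
  rw [div_lt_iff₀ hυn] at hj
  linarith

section LyapunovSplitting

variable {V : Type*} [SeminormedAddCommGroup V]

structure IsBoundedSubadditive (N : V → ℝ) (K : ℝ) : Prop where
  nonneg : ∀ v, 0 ≤ N v
  le_mul_norm : ∀ v, N v ≤ K * ‖v‖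
  add_le : ∀ v w, N (v + w) ≤ N v + N w

theorem IsBoundedSubadditive.mono {N : V → ℝ} {K K' : ℝ} (h : IsBoundedSubadditive N K)
    (hK : K ≤ K') : IsBoundedSubadditive N K' :=
  ⟨h.nonneg, fun v ↦ (h.le_mul_norm v).trans (by gcongr), h.add_le⟩

/-- `Ns` and `Nu` stand for adapted norms of the stable and unstable components of a vector,
in which `T` contracts by `lamS` and expands by `κ`. -/
structure IsLyapunovSplitting (T : V → V) (Ns Nu : V → ℝ) (K lamS κ : ℝ) : Prop where
  stable : IsBoundedSubadditive Ns K
  unstable : IsBoundedSubadditive Nu K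
  norm_le_add : ∀ v, ‖v‖ ≤ Ns v + Nu v
  map_stable_le : ∀ v, Ns (T v) ≤ lamS * Ns v
  le_map_unstable : ∀ v, κ * Nu v ≤ Nu (T v)

theorem IsLyapunovSplitting.norm_le_of_pseudoOrbit {T : V → V} {Ns Nu : V → ℝ}
    {K lamS κ c : ℝ} (h : IsLyapunovSplitting T Ns Nu K lamS κ) (hK : 0 ≤ K) (hlamS : 0 ≤ lamS)
    (hc : 0 ≤ c) (hs : lamS + 2 * c < 1) (hu : 1 < κ - 2 * c) {X : ℕ → V}
    (hXB : ∃ B, ∀ n, ‖X n‖ ≤ B) (hX : ∀ n, K * ‖X (n + 1) - T (X n)‖ ≤ c * ‖X n‖) (n : ℕ) :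
    ‖X n‖ ≤ 2 * K * (lamS + 2 * c) ^ n * ‖X 0‖ := by
  obtain ⟨hNs, hNu, hnorm, hs_map, hu_map⟩ := h
  set σ := fun n ↦ Ns (X n)
  set υ := fun n ↦ Nu (X n)
  set r := fun n ↦ X (n + 1) - T (X n)
  have hr : ∀ n, K * ‖r n‖ ≤ c * (σ n + υ n) := fun n ↦
    (hX n).trans (mul_le_mul_of_nonneg_left (hnorm _) hc)
  have hσ : ∀ n, σ (n + 1) ≤ lamS * σ n + c * (σ n + υ n) := fun n ↦ by
    calc σ (n + 1) = Ns (T (X n) + r n) := by simp [σ, r]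
      _ ≤ Ns (T (X n)) + K * ‖r n‖ :=
        (hNs.add_le _ _).trans (by gcongr; exact hNs.le_mul_norm _)
      _ ≤ _ := add_le_add (hs_map _) (hr n)
  have hυ : ∀ n, κ * υ n ≤ υ (n + 1) + c * (σ n + υ n) := fun n ↦ by
    calc κ * υ n ≤ Nu (X (n + 1) + -r n) := by simpa [υ, r] using hu_map (X n)
      _ ≤ υ (n + 1) + K * ‖-r n‖ :=
        (hNu.add_le _ _).trans (by gcongr; exact hNu.le_mul_norm _)
      _ ≤ _ := by rw [norm_neg]; exact add_le_add le_rfl (hr n)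
  obtain ⟨B, hB⟩ := hXB
  have hcone := le_of_cone_recurrence hc hs hu (fun n ↦ hNs.nonneg _)
    (fun n ↦ (hNu.le_mul_norm _).trans (mul_le_mul_of_nonneg_left (hB n) hK)) hσ hυ
  have hgeom : σ n ≤ (lamS + 2 * c) ^ n * σ 0 := le_geom (by linarith) n fun k _ ↦ by
    nlinarith [hσ k, hcone k]
  calc ‖X n‖ ≤ σ n + υ n := hnorm _
    _ ≤ 2 * ((lamS + 2 * c) ^ n * σ 0) := by linarith [hcone n]
    _ ≤ 2 * ((lamS + 2 * c) ^ n * (K * ‖X 0‖)) := by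
        gcongr
        exact hNs.le_mul_norm _
    _ = _ := by ring

theorem exists_isBoundedSubadditive_contracting {W : Type*} [NormedAddCommGroup W]
    [NormedSpace ℂ W] [CompleteSpace W] [NormedSpace ℂ V] (a : W →L[ℂ] W)
    (ha : ∀ z ∈ spectrum ℂ a, ‖z‖ < 1) (π : V →L[ℂ] W) :
    ∃ N : V → ℝ, ∃ K lam : ℝ, 0 < lam ∧ lam < 1 ∧ IsBoundedSubadditive N K ∧
      (∀ v, ‖π v‖ ≤ N v) ∧ ∀ v v', π v' = a (π v) → N v' ≤ lam * N v := by
  obtain ⟨m, hm, lam, hlam0, hlam1, hpow⟩ :=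
    spectrum.exists_norm_pow_le_pow_of_forall_norm_lt_one a ha
  refine ⟨fun v ↦ adaptedNorm a m lam (π v), (∑ k ∈ Finset.range m, ‖a ^ k‖ / lam ^ k) * ‖π‖,
    lam, hlam0, hlam1, ⟨fun v ↦ adaptedNorm_nonneg hlam0.le _, fun v ↦ ?_, fun v w ↦ ?_⟩,
    fun v ↦ norm_le_adaptedNorm hlam0.le hm _, fun v v' hv ↦ ?_⟩
  · rw [mul_assoc]
    exact (adaptedNorm_le hlam0.le _).trans (by gcongr; exact π.le_opNorm v)
  · simpa only [map_add] using adaptedNorm_add_le hlam0.le _ _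
  · simpa only [hv] using adaptedNorm_apply_le hlam0 hpow _

end LyapunovSplitting

namespace Module.End

variable {V : Type*} [NormedAddCommGroup V] [NormedSpace ℂ V] [FiniteDimensional ℂ V]

theorem exists_isLyapunovSplitting (T : End ℂ V) (hT : ∀ z ∈ spectrum ℂ T, ‖z‖ ≠ 1) :
    ∃ (Ns Nu : V → ℝ) (K lamS κ : ℝ), 0 < K ∧ 0 < lamS ∧ lamS < 1 ∧ 1 < κ ∧
      IsLyapunovSplitting T Ns Nu K lamS κ := by
  set S := T.spectralSubspace {z | ‖z‖ < 1}
  set U := T.spectralSubspace {z | 1 < ‖z‖}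
  have hSU : IsCompl S U := T.isCompl_spectralSubspace hT
  have hS := T.mapsTo_spectralSubspace {z : ℂ | ‖z‖ < 1}
  have hU := T.mapsTo_spectralSubspace {z : ℂ | 1 < ‖z‖}
  obtain ⟨e, he, he_symm⟩ := T.exists_linearEquiv_restrict_spectralSubspace
    (s := {z : ℂ | 1 < ‖z‖}) (by norm_num)
  have hspecS : ∀ z ∈ spectrum ℂ (toContinuousLinearMap S (T.restrict hS)), ‖z‖ < 1 :=
    fun z hz ↦ T.mem_of_hasEigenvalue_restrict_spectralSubspace
      (hasEigenvalue_iff_mem_spectrum_toContinuousLinearMap.mpr hz)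
  have hspecU : ∀ z ∈ spectrum ℂ (toContinuousLinearMap U (e.symm : End ℂ U)), ‖z‖ < 1 :=
    fun z hz ↦ by
      have := he_symm z (hasEigenvalue_iff_mem_spectrum_toContinuousLinearMap.mpr hz)
      simpa using (one_lt_inv_iff₀.mp (by simpa using this)).2
  obtain ⟨Ns, Ks, lamS, hlS0, hlS1, hNs, hπS, hNs_map⟩ := exists_isBoundedSubadditive_contracting
    _ hspecS (LinearMap.toContinuousLinearMap (S.projectionOnto U hSU))
  obtain ⟨Nu, Ku, lamU, hlU0, hlU1, hNu, hπU, hNu_map⟩ := exists_isBoundedSubadditive_contracting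
    _ hspecU (LinearMap.toContinuousLinearMap (U.projectionOnto S hSU.symm))
  refine ⟨Ns, Nu, max (max Ks Ku) 1, lamS, lamU⁻¹, by positivity, hlS0, hlS1,
    one_lt_inv_iff₀.mpr ⟨hlU0, hlU1⟩, hNs.mono (by simp), hNu.mono (by simp), fun v ↦ ?_,
    fun v ↦ hNs_map _ _ (Submodule.projectionOnto_apply_eq_restrict hSU hS hU v), fun v ↦ ?_⟩
  · calc ‖v‖ = ‖(S.projectionOnto U hSU v : V) + (U.projectionOnto S hSU.symm v : V)‖ := by
          rw [Submodule.coe_projectionOnto_apply, Submodule.coe_projectionOnto_apply,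
            Submodule.projection_add_projection_eq_self]
      _ ≤ Ns v + Nu v := (norm_add_le _ _).trans (add_le_add (hπS v) (hπU v))
  · refine (inv_mul_le_iff₀ hlU0).mpr (hNu_map _ _ ?_)
    change _ = e.symm _
    simp only [LinearMap.coe_toContinuousLinearMap']
    rw [Submodule.projectionOnto_apply_eq_restrict hSU.symm hU hS, ← he]
    exact (e.symm_apply_apply _).symm

theorem exists_norm_le_geometric_of_pseudoOrbit (T : End ℂ V)
    (hT : ∀ z ∈ spectrum ℂ T, ‖z‖ ≠ 1) :
    ∃ ε > 0, ∃ C > 0, ∃ lam : ℝ, 0 < lam ∧ lam < 1 ∧ ∀ X : ℕ → V, (∃ B, ∀ n, ‖X n‖ ≤ B) →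
      (∀ n, ‖X (n + 1) - T (X n)‖ ≤ ε * ‖X n‖) → ∀ n, ‖X n‖ ≤ C * lam ^ n * ‖X 0‖ := by
  obtain ⟨Ns, Nu, K, lamS, κ, hK, hlamS0, hlamS1, hκ, h⟩ := T.exists_isLyapunovSplitting hT
  obtain ⟨c, hc, hs, hu⟩ : ∃ c : ℝ, 0 < c ∧ lamS + 2 * c < 1 ∧ 1 < κ - 2 * c :=
    ⟨min (1 - lamS) (κ - 1) / 4, div_pos (lt_min (by linarith) (by linarith)) four_pos,
      by linarith [min_le_left (1 - lamS) (κ - 1)], by linarith [min_le_right (1 - lamS) (κ - 1)]⟩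
  refine ⟨c / K, by positivity, 2 * K, by positivity, lamS + 2 * c, by positivity, hs,
    fun X hXB hX ↦ h.norm_le_of_pseudoOrbit hK.le hlamS0.le hc.le hs hu hXB fun n ↦ ?_⟩
  calc K * ‖X (n + 1) - T (X n)‖ ≤ K * (c / K * ‖X n‖) := by gcongr; exact hX n
    _ = c * ‖X n‖ := by field_simp

end Module.End

theorem norm_compLeft_algebraMap {ι : Type*} [Fintype ι] (v : ι → ℝ) :
    ‖(algebraMap ℝ ℂ).compLeft ι v‖ = ‖v‖ := by
  simp [Pi.norm_def, RingHom.compLeft]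

theorem Matrix.exists_norm_le_geometric_of_pseudoOrbit {d : ℕ} (M : Matrix (Fin d) (Fin d) ℝ)
    (hM : IsMapHyperbolic M) :
    ∃ ε > 0, ∃ C > 0, ∃ lam : ℝ, 0 < lam ∧ lam < 1 ∧ ∀ X : ℕ → (Fin d → ℝ),
      (∃ B, ∀ n, ‖X n‖ ≤ B) → (∀ n, ‖X (n + 1) - M *ᵥ X n‖ ≤ ε * ‖X n‖) →
        ∀ n, ‖X n‖ ≤ C * lam ^ n * ‖X 0‖ := by
  obtain ⟨ε, hε, C, hC, lam, hlam0, hlam1, hdecay⟩ :=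
    Module.End.exists_norm_le_geometric_of_pseudoOrbit (M.map (algebraMap ℝ ℂ)).toLin'
      (by rwa [Matrix.spectrum_toLin'])
  refine ⟨ε, hε, C, hC, lam, hlam0, hlam1, fun X ⟨B, hB⟩ hX n ↦ ?_⟩
  set ι := (algebraMap ℝ ℂ).compLeft (Fin d)
  have hι (v : Fin d → ℝ) : (M.map (algebraMap ℝ ℂ)).toLin' (ι v) = ι (M *ᵥ v) :=
    funext fun i ↦ (RingHom.map_mulVec _ M v i).symm
  simpa only [ι, norm_compLeft_algebraMap] using hdecay (fun n ↦ ι (X n))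
    ⟨B, by simpa only [ι, norm_compLeft_algebraMap] using hB⟩
    (fun n ↦ by simpa only [hι, ← map_sub, ι, norm_compLeft_algebraMap] using hX n) n

theorem derivMatrix_mulVec {d : ℕ} (f : (Fin d → ℝ) → (Fin d → ℝ)) (p v : Fin d → ℝ) :
    derivMatrix f p *ᵥ v = fderiv ℝ f p v :=
  LinearMap.toMatrix'_mulVec _ v

theorem tendsto_iterate_iff_exists_iterate_mem_localStableSet {d : ℕ}
    {f : (Fin d → ℝ) → (Fin d → ℝ)} {p : Fin d → ℝ} {β : ℝ} (hβ : 0 < β)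
    (h : ∀ x ∈ localStableSet f p β, Tendsto (fun n ↦ f^[n] x) atTop (𝓝 p)) (z : Fin d → ℝ) :
    Tendsto (fun n ↦ f^[n] z) atTop (𝓝 p) ↔ ∃ n, f^[n] z ∈ localStableSet f p β := by
  constructor
  · intro hz
    obtain ⟨N, hN⟩ := Metric.tendsto_atTop.mp hz β hβ
    refine ⟨N, fun k ↦ ?_⟩
    rw [← Function.iterate_add_apply, ← dist_eq_norm]
    exact (hN _ (Nat.le_add_left N k)).le
  · rintro ⟨N, hN⟩
    rw [← tendsto_add_atTop_iff_nat N]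
    simpa only [Function.iterate_add_apply] using h _ hN

theorem local_stable_set_contraction_general {d : ℕ}
    (f : (Fin d → ℝ) → (Fin d → ℝ))
    (hf : ContDiff ℝ 1 f)
    (p : Fin d → ℝ) (hp : f p = p)
    (hhyp : IsMapHyperbolic (derivMatrix f p)) :
    ∃ β > (0 : ℝ), ∃ C > (0 : ℝ), ∃ lam : ℝ, 0 < lam ∧ lam < 1 ∧
      (∀ x ∈ localStableSet f p β, ∀ n : ℕ,
        ‖f^[n] x - p‖ ≤ C * lam ^ n * ‖x - p‖) ∧
      (∀ z : Fin d → ℝ,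
        Tendsto (fun n : ℕ => f^[n] z) atTop (nhds p) ↔
        ∃ n : ℕ, f^[n] z ∈ localStableSet f p β) := by
  obtain ⟨ε, hε, C, hC, lam, hlam0, hlam1, hdecay⟩ :=
    Matrix.exists_norm_le_geometric_of_pseudoOrbit (derivMatrix f p) hhyp
  obtain ⟨β, hβ, hrem⟩ := Metric.nhds_basis_closedBall.eventually_iff.mp
    ((hf.differentiable one_ne_zero p).hasFDerivAt.isLittleO.def hε)
  have hcontr : ∀ x ∈ localStableSet f p β, ∀ n, ‖f^[n] x - p‖ ≤ C * lam ^ n * ‖x - p‖ :=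
    fun x hx ↦ hdecay (fun n ↦ f^[n] x - p) ⟨β, hx⟩ fun n ↦ by
      have := hrem (mem_closedBall_iff_norm.mpr (hx n))
      rwa [hp, ← Function.iterate_succ_apply' f n x, ← derivMatrix_mulVec] at this
  refine ⟨β, hβ, C, hC, lam, hlam0, hlam1, hcontr,
    tendsto_iterate_iff_exists_iterate_mem_localStableSet hβ fun x hx ↦ ?_⟩
  refine tendsto_iff_norm_sub_tendsto_zero.mpr
    (squeeze_zero (fun _ ↦ norm_nonneg _) (hcontr x hx) ?_)
  simpa using ((tendsto_pow_atTop_nhds_zero_of_lt_one hlam0.le hlam1).const_mul C).mul_const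
    ‖x - p‖

/-- On a small local stable set of a hyperbolic fixed point, orbits converge
to the fixed point exponentially fast; consequently an orbit converges to `p`
iff it eventually enters the local stable set. -/
theorem local_stable_set_contraction {d : ℕ}
    (f g : (Fin d → ℝ) → (Fin d → ℝ))
    (hf : ContDiff ℝ 1 f) (hg : ContDiff ℝ 1 g)
    (hgf : Function.LeftInverse g f) (hfg : Function.RightInverse g f)
    (p : Fin d → ℝ) (hp : f p = p)
    (hinv : IsUnit (derivMatrix f p).det)
    (hhyp : IsMapHyperbolic (derivMatrix f p)) :
    ∃ β > (0 : ℝ), ∃ C > (0 : ℝ), ∃ lam : ℝ, 0 < lam ∧ lam < 1 ∧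
      (∀ x ∈ localStableSet f p β, ∀ n : ℕ,
        ‖f^[n] x - p‖ ≤ C * lam ^ n * ‖x - p‖) ∧
      (∀ z : Fin d → ℝ,
        Tendsto (fun n : ℕ => f^[n] z) atTop (nhds p) ↔
        ∃ n : ℕ, f^[n] z ∈ localStableSet f p β) :=
  local_stable_set_contraction_general f hf p hp hhyp
end
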